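/- arXiv:2006.11355 — 7 statements merged into one kernel-verified Lean document; each statement's English description precedes it below -/
import Mathlib

section
/- Let x = (x₀, x̄) ∈ ℝ × ℝᵈ and z = (z₀, z̄) ∈ ℝ × ℝᵈ satisfy x₀ ≥ ‖x̄‖ and z₀ ≥ ‖z̄‖ (i.e., both lie in the second-order cone). If ⟨x, z⟩ = x₀z₀ + ⟨x̄, z̄⟩ ≤ μ for some μ ≥ 0, then ‖z₀·x̄ + x₀·z̄‖ ≤ √(2·x₀·z₀·μ). -/
open scoped RealInnerProductSpace

theorem norm_smul_add_smul_sq_le {E : Type*} [NormedAddCommGroup E] [InnerProductSpace ℝ E]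
    {a b : ℝ} {x z : E} (hx : ‖x‖ ≤ a) (hz : ‖z‖ ≤ b) :
    ‖b • x + a • z‖ ^ 2 ≤ 2 * a * b * (a * b + ⟪x, z⟫) := by
  have ha : 0 ≤ a := (norm_nonneg x).trans hx
  have hb : 0 ≤ b := (norm_nonneg z).trans hz
  have hx2 : ‖x‖ ^ 2 ≤ a ^ 2 := pow_le_pow_left₀ (norm_nonneg x) hx 2
  have hz2 : ‖z‖ ^ 2 ≤ b ^ 2 := pow_le_pow_left₀ (norm_nonneg z) hz 2
  calc ‖b • x + a • z‖ ^ 2 = b ^ 2 * ‖x‖ ^ 2 + 2 * a * b * ⟪x, z⟫ + a ^ 2 * ‖z‖ ^ 2 := by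
        rw [norm_add_sq_real, norm_smul, norm_smul, real_inner_smul_left, real_inner_smul_right,
          Real.norm_of_nonneg ha, Real.norm_of_nonneg hb]
        ring
    _ ≤ b ^ 2 * a ^ 2 + 2 * a * b * ⟪x, z⟫ + a ^ 2 * b ^ 2 := by gcongr
    _ = 2 * a * b * (a * b + ⟪x, z⟫) := by ring

theorem socp_complementarity_bound_general {d : ℕ} (x0 z0 μ : ℝ)
    (xb zb : EuclideanSpace ℝ (Fin d))
    (hx : ‖xb‖ ≤ x0) (hz : ‖zb‖ ≤ z0)
    (hgap : x0 * z0 + (inner ℝ xb zb : ℝ) ≤ μ) :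
    ‖z0 • xb + x0 • zb‖ ≤ Real.sqrt (2 * x0 * z0 * μ) := by
  have hx0 : 0 ≤ x0 := (norm_nonneg xb).trans hx
  have hz0 : 0 ≤ z0 := (norm_nonneg zb).trans hz
  refine Real.le_sqrt_of_sq_le ((norm_smul_add_smul_sq_le hx hz).trans ?_)
  gcongr

/-- Second-order cone near-complementarity bound. -/
theorem socp_complementarity_bound {d : ℕ} (x0 z0 μ : ℝ)
    (xb zb : EuclideanSpace ℝ (Fin d))
    (hx : ‖xb‖ ≤ x0) (hz : ‖zb‖ ≤ z0) (hμ : 0 ≤ μ)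
    (hgap : x0 * z0 + (inner ℝ xb zb : ℝ) ≤ μ) :
    ‖z0 • xb + x0 • zb‖ ≤ Real.sqrt (2 * x0 * z0 * μ) :=
  socp_complementarity_bound_general x0 z0 μ xb zb hx hz hgap
end

section
/- Let a₁,…,aₙ ∈ ℝᵈ, r₁,…,rₙ > 0, λ > 0, and let C ⊆ {1,…,n}. Set r' = Σ_{i∈C} rᵢ. Suppose there exist vectors q*_{ij} ∈ ℝᵈ for i,j ∈ C, i < j, with ‖q*_{ij}‖ ≤ λ, satisfying for every i ∈ C: aᵢ − (1/r')Σ_{l∈C} r_l a_l = Σ_{j∈C} r_j q*_{⟨ij⟩}, where q*_{⟨ij⟩} = q*_{ij} if i<j, −q*_{ji} if i>j, and 0 if i=j. Then any minimizer x* of F(x) = (1/2)Σᵢ rᵢ‖xᵢ−aᵢ‖² + λΣ_{i<j} rᵢr_j‖xᵢ−x_j‖ satisfies xᵢ* = x_j* for all i,j ∈ C. -/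
open Finset

local notation "⟪" x ", " y "⟫" => @inner ℝ _ _ x y

lemma pair_sum_half {n : ℕ} (g : Fin n → Fin n → ℝ)
    (hs : ∀ i j, g i j = g j i) (hd : ∀ i, g i i = 0) :
    ∑ p ∈ Finset.univ.filter (fun p : Fin n × Fin n => p.1 < p.2), g p.1 p.2
      = (1/2) * ∑ i, ∑ j, g i j := by
  have htot : ∑ i, ∑ j, g i j
      = ∑ p ∈ (Finset.univ : Finset (Fin n × Fin n)), g p.1 p.2 := by
    rw [← Finset.univ_product_univ, Finset.sum_product]
  have hsplit := Finset.sum_filter_add_sum_filter_not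
    (Finset.univ : Finset (Fin n × Fin n)) (fun p => p.1 < p.2) (fun p => g p.1 p.2)
  have h1 : ∑ p ∈ Finset.univ.filter (fun p : Fin n × Fin n => ¬ p.1 < p.2), g p.1 p.2
      = ∑ p ∈ Finset.univ.filter (fun p : Fin n × Fin n => ¬ p.2 < p.1), g p.2 p.1 := by
    apply Finset.sum_bij' (fun p _ => Prod.swap p) (fun p _ => Prod.swap p) <;> simp
  have h2 : ∑ p ∈ Finset.univ.filter (fun p : Fin n × Fin n => ¬ p.2 < p.1), g p.2 p.1
      = ∑ p ∈ Finset.univ.filter (fun p : Fin n × Fin n => ¬ p.2 < p.1),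
          (if p.1 < p.2 then g p.1 p.2 else 0) := by
    apply Finset.sum_congr rfl
    intro p hp
    simp only [Finset.mem_filter, not_lt] at hp
    by_cases h : p.1 < p.2
    · rw [if_pos h, hs]
    · have : p.1 = p.2 := le_antisymm hp.2 (not_lt.mp h)
      rw [if_neg h, this, hd]
  have h3 : ∑ p ∈ Finset.univ.filter (fun p : Fin n × Fin n => ¬ p.2 < p.1),
          (if p.1 < p.2 then g p.1 p.2 else 0)
      = ∑ p ∈ Finset.univ.filter (fun p : Fin n × Fin n => p.1 < p.2), g p.1 p.2 := by
    rw [Finset.sum_ite, Finset.sum_const_zero, add_zero, Finset.filter_filter]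
    apply Finset.sum_congr _ (fun _ _ => rfl)
    apply Finset.filter_congr
    intro p _
    constructor
    · exact fun h => h.2
    · exact fun h => ⟨not_lt.mpr h.le, h⟩
  have := htot
  rw [← hsplit, h1, h2, h3] at this
  linarith

/-- CGR sufficient condition: solvability of the subgradient system certifies
that `C` is contained in a single cluster of the sum-of-norms minimizer. -/
theorem cgr_sufficient_condition {n d : ℕ}
    (a : Fin n → EuclideanSpace ℝ (Fin d)) (r : Fin n → ℝ) (lam : ℝ)
    (C : Finset (Fin n)) (q : Fin n → Fin n → EuclideanSpace ℝ (Fin d))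
    (hr : ∀ i, 0 < r i) (hlam : 0 < lam)
    (hanti : ∀ i j, q i j = - q j i)
    (hbound : ∀ i ∈ C, ∀ j ∈ C, i < j → ‖q i j‖ ≤ lam)
    (hsys : ∀ i ∈ C,
      a i - ((∑ l ∈ C, r l)⁻¹) • ∑ l ∈ C, r l • a l = ∑ j ∈ C, r j • q i j)
    (F : (Fin n → EuclideanSpace ℝ (Fin d)) → ℝ)
    (hF : ∀ x, F x = (1/2) * ∑ i, r i * ‖x i - a i‖^2 +
      lam * ∑ p ∈ Finset.univ.filter (fun p : Fin n × Fin n => p.1 < p.2),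
        r p.1 * r p.2 * ‖x p.1 - x p.2‖)
    (xstar : Fin n → EuclideanSpace ℝ (Fin d))
    (hmin : ∀ y, F xstar ≤ F y) :
    ∀ i ∈ C, ∀ j ∈ C, xstar i = xstar j := by
  intro i0 hi0 j0 hj0
  have hCne : C.Nonempty := ⟨i0, hi0⟩
  set x := xstar with hx
  set r' : ℝ := ∑ l ∈ C, r l with hr'def
  have hr' : 0 < r' := Finset.sum_pos (fun i _ => hr i) hCne
  set m : EuclideanSpace ℝ (Fin d) := r'⁻¹ • ∑ l ∈ C, r l • x l with hmdef
  suffices hall : ∀ k ∈ C, x k = m by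
    rw [hall i0 hi0, hall j0 hj0]
  -- the comparison point
  set y : Fin n → EuclideanSpace ℝ (Fin d) := fun i => if i ∈ C then m else x i with hydef
  have hyC : ∀ i ∈ C, y i = m := fun i hi => by simp [hydef, hi]
  have hyNC : ∀ i ∈ Cᶜ, y i = x i := fun i hi => by
    simp only [Finset.mem_compl] at hi; simp [hydef, hi]
  have hrm : r' • m = ∑ l ∈ C, r l • x l := by
    rw [hmdef, smul_smul, mul_inv_cancel₀ hr'.ne', one_smul]
  -- bound on all q i j for i j in C
  have hq : ∀ i ∈ C, ∀ j ∈ C, ‖q i j‖ ≤ lam := by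
    intro i hi j hj
    rcases lt_trichotomy i j with h | h | h
    · exact hbound i hi j hj h
    · subst h
      have h0 : q i i + q i i = 0 := by nth_rewrite 1 [hanti i i]; exact neg_add_cancel _
      have h2 : (2:ℝ) • q i i = 0 := by rw [two_smul]; exact h0
      have : q i i = 0 := by
        rcases smul_eq_zero.mp h2 with h | h
        · norm_num at h
        · exact h
      rw [this, norm_zero]; exact hlam.le
    · rw [hanti i j, norm_neg]; exact hbound j hj i hi h
  -- abbreviations
  set S : ℝ := ∑ k ∈ C, r k * ‖x k - m‖^2 with hSdef
  set NC : ℝ := ∑ i ∈ C, ∑ j ∈ C, r i * r j * ‖x i - x j‖ with hNCdef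
  -- Step (A): quadratic part estimate
  -- pointwise square expansion
  have hptw : ∀ u v w : EuclideanSpace ℝ (Fin d),
      ‖u - w‖^2 - ‖v - w‖^2 = ‖u - v‖^2 + 2 * ⟪u - v, v - w⟫ := by
    intro u v w
    have h := norm_add_sq_real (u - v) (v - w)
    rw [sub_add_sub_cancel] at h
    linarith
  -- the double sum of inner products against the certificate
  set P : ℝ := ∑ i ∈ C, ∑ j ∈ C, r i * r j * ⟪x i - m, q i j⟫ with hPdef
  have hT : ∑ i ∈ C, r i * ⟪x i - m, m - a i⟫ = - P := by
    have habar : ∀ i ∈ C, m - a i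
        = (m - r'⁻¹ • ∑ l ∈ C, r l • a l) - ∑ j ∈ C, r j • q i j := by
      intro i hi
      rw [← hsys i hi]
      abel
    have hzero : ∑ i ∈ C, r i • (x i - m) = (0 : EuclideanSpace ℝ (Fin d)) := by
      simp_rw [smul_sub]
      rw [Finset.sum_sub_distrib, ← Finset.sum_smul, ← hr'def, hrm, sub_self]
    calc ∑ i ∈ C, r i * ⟪x i - m, m - a i⟫
        = ∑ i ∈ C, (r i * ⟪x i - m, m - r'⁻¹ • ∑ l ∈ C, r l • a l⟫
            - ∑ j ∈ C, r i * r j * ⟪x i - m, q i j⟫) := by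
          apply Finset.sum_congr rfl
          intro i hi
          rw [habar i hi, inner_sub_right, mul_sub, inner_sum, Finset.mul_sum]
          congr 1
          apply Finset.sum_congr rfl
          intro j _
          rw [real_inner_smul_right]; ring
      _ = ∑ i ∈ C, r i * ⟪x i - m, m - r'⁻¹ • ∑ l ∈ C, r l • a l⟫ - P := by
          rw [Finset.sum_sub_distrib, hPdef]
      _ = ⟪∑ i ∈ C, r i • (x i - m), m - r'⁻¹ • ∑ l ∈ C, r l • a l⟫ - P := by
          rw [sum_inner]
          congr 1
          apply Finset.sum_congr rfl
          intro i _
          rw [real_inner_smul_left]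
      _ = - P := by rw [hzero, inner_zero_left, zero_sub]
  -- 2 P as a sum over differences
  have h2P : P + P = ∑ i ∈ C, ∑ j ∈ C, r i * r j * ⟪x i - x j, q i j⟫ := by
    have hswapP : P = ∑ i ∈ C, ∑ j ∈ C, -(r i * r j * ⟪x j - m, q i j⟫) := by
      rw [hPdef, Finset.sum_comm]
      apply Finset.sum_congr rfl
      intro i _
      apply Finset.sum_congr rfl
      intro j _
      rw [hanti j i, inner_neg_right]
      ring
    nth_rewrite 2 [hswapP]
    rw [hPdef, ← Finset.sum_add_distrib]
    apply Finset.sum_congr rfl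
    intro i _
    rw [← Finset.sum_add_distrib]
    apply Finset.sum_congr rfl
    intro j _
    have hxx : x i - x j = (x i - m) - (x j - m) := by abel
    rw [hxx]
    simp only [inner_sub_left]
    ring
  -- bound 2P by lam * NC
  have hPbound : P + P ≤ lam * NC := by
    rw [h2P, hNCdef, Finset.mul_sum]
    apply Finset.sum_le_sum
    intro i hi
    rw [Finset.mul_sum]
    apply Finset.sum_le_sum
    intro j hj
    have h1 : ⟪x i - x j, q i j⟫ ≤ ‖x i - x j‖ * lam := by
      calc ⟪x i - x j, q i j⟫ ≤ ‖x i - x j‖ * ‖q i j‖ := real_inner_le_norm _ _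
        _ ≤ ‖x i - x j‖ * lam :=
          mul_le_mul_of_nonneg_left (hq i hi j hj) (norm_nonneg _)
    have h2 : (0:ℝ) ≤ r i * r j := mul_nonneg (hr i).le (hr j).le
    nlinarith
  -- assemble step (A)
  have hA : (∑ i, r i * ‖x i - a i‖^2) - (∑ i, r i * ‖y i - a i‖^2)
      ≥ S - lam * NC := by
    have hQ : (∑ i, r i * ‖x i - a i‖^2) - (∑ i, r i * ‖y i - a i‖^2)
        = ∑ i ∈ C, r i * (‖x i - a i‖^2 - ‖m - a i‖^2) := by
      rw [← Finset.sum_add_sum_compl C (fun i => r i * ‖x i - a i‖^2),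
        ← Finset.sum_add_sum_compl C (fun i => r i * ‖y i - a i‖^2)]
      have e1 : ∑ i ∈ Cᶜ, r i * ‖y i - a i‖^2 = ∑ i ∈ Cᶜ, r i * ‖x i - a i‖^2 := by
        apply Finset.sum_congr rfl
        intro i hi
        rw [hyNC i hi]
      have e2 : ∑ i ∈ C, r i * ‖y i - a i‖^2 = ∑ i ∈ C, r i * ‖m - a i‖^2 := by
        apply Finset.sum_congr rfl
        intro i hi
        rw [hyC i hi]
      rw [e1, e2]
      simp_rw [mul_sub]
      rw [Finset.sum_sub_distrib]
      ring
    have hQ2 : ∑ i ∈ C, r i * (‖x i - a i‖^2 - ‖m - a i‖^2)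
        = S + 2 * ∑ i ∈ C, r i * ⟪x i - m, m - a i⟫ := by
      rw [hSdef, Finset.mul_sum, ← Finset.sum_add_distrib]
      apply Finset.sum_congr rfl
      intro i _
      rw [hptw (x i) m (a i)]
      ring
    rw [hQ, hQ2, hT]
    linarith
  -- Step (B): norm part estimate
  have expand : ∀ h : Fin n → Fin n → ℝ, (∑ i, ∑ j, h i j)
      = ((∑ i ∈ C, ∑ j ∈ C, h i j) + ∑ i ∈ C, ∑ j ∈ Cᶜ, h i j)
        + ((∑ i ∈ Cᶜ, ∑ j ∈ C, h i j) + ∑ i ∈ Cᶜ, ∑ j ∈ Cᶜ, h i j) := by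
    intro h
    have hin : ∀ i, ∑ j, h i j = ∑ j ∈ C, h i j + ∑ j ∈ Cᶜ, h i j :=
      fun i => (Finset.sum_add_sum_compl C _).symm
    simp_rw [hin]
    rw [← Finset.sum_add_sum_compl C (fun i => ∑ j ∈ C, h i j + ∑ j ∈ Cᶜ, h i j),
      Finset.sum_add_distrib, Finset.sum_add_distrib]
  have hcross : ∀ w : EuclideanSpace ℝ (Fin d),
      r' * ‖m - w‖ ≤ ∑ i ∈ C, r i * ‖x i - w‖ := by
    intro w
    have h1 : r' • (m - w) = ∑ i ∈ C, r i • (x i - w) := by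
      simp_rw [smul_sub]
      rw [Finset.sum_sub_distrib, ← Finset.sum_smul, hrm, hr'def]
    calc r' * ‖m - w‖ = ‖r' • (m - w)‖ := by
          rw [norm_smul, Real.norm_of_nonneg hr'.le]
      _ = ‖∑ i ∈ C, r i • (x i - w)‖ := by rw [h1]
      _ ≤ ∑ i ∈ C, ‖r i • (x i - w)‖ := norm_sum_le _ _
      _ = ∑ i ∈ C, r i * ‖x i - w‖ := by
          apply Finset.sum_congr rfl
          intro i _
          rw [norm_smul, Real.norm_of_nonneg (hr i).le]
  have hT2 : ∑ i ∈ C, ∑ j ∈ Cᶜ, r i * r j * ‖y i - y j‖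
      ≤ ∑ i ∈ C, ∑ j ∈ Cᶜ, r i * r j * ‖x i - x j‖ := by
    rw [Finset.sum_comm, Finset.sum_comm (s := C)]
    apply Finset.sum_le_sum
    intro j hj
    calc ∑ i ∈ C, r i * r j * ‖y i - y j‖
        = ∑ i ∈ C, r j * (r i * ‖m - x j‖) := by
          apply Finset.sum_congr rfl
          intro i hi
          rw [hyC i hi, hyNC j hj]; ring
      _ = r j * (r' * ‖m - x j‖) := by
          rw [← Finset.mul_sum, hr'def, Finset.sum_mul]
      _ ≤ r j * ∑ i ∈ C, r i * ‖x i - x j‖ :=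
          mul_le_mul_of_nonneg_left (hcross (x j)) (hr j).le
      _ = ∑ i ∈ C, r i * r j * ‖x i - x j‖ := by
          rw [Finset.mul_sum]
          apply Finset.sum_congr rfl
          intro i _; ring
  have hT3 : ∑ i ∈ Cᶜ, ∑ j ∈ C, r i * r j * ‖y i - y j‖
      ≤ ∑ i ∈ Cᶜ, ∑ j ∈ C, r i * r j * ‖x i - x j‖ := by
    apply Finset.sum_le_sum
    intro i hi
    calc ∑ j ∈ C, r i * r j * ‖y i - y j‖
        = ∑ j ∈ C, r i * (r j * ‖m - x i‖) := by
          apply Finset.sum_congr rfl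
          intro j hj
          rw [hyC j hj, hyNC i hi, norm_sub_rev]; ring
      _ = r i * (r' * ‖m - x i‖) := by
          rw [← Finset.mul_sum, hr'def, Finset.sum_mul]
      _ ≤ r i * ∑ j ∈ C, r j * ‖x j - x i‖ :=
          mul_le_mul_of_nonneg_left (hcross (x i)) (hr i).le
      _ = ∑ j ∈ C, r i * r j * ‖x i - x j‖ := by
          rw [Finset.mul_sum]
          apply Finset.sum_congr rfl
          intro j _; rw [norm_sub_rev]; ring
  have hT1y : ∑ i ∈ C, ∑ j ∈ C, r i * r j * ‖y i - y j‖ = 0 := by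
    apply Finset.sum_eq_zero
    intro i hi
    apply Finset.sum_eq_zero
    intro j hj
    rw [hyC i hi, hyC j hj, sub_self, norm_zero, mul_zero]
  have hT4 : ∑ i ∈ Cᶜ, ∑ j ∈ Cᶜ, r i * r j * ‖y i - y j‖
      = ∑ i ∈ Cᶜ, ∑ j ∈ Cᶜ, r i * r j * ‖x i - x j‖ := by
    apply Finset.sum_congr rfl
    intro i hi
    apply Finset.sum_congr rfl
    intro j hj
    rw [hyNC i hi, hyNC j hj]
  have hB : (∑ i, ∑ j, r i * r j * ‖x i - x j‖)
      - (∑ i, ∑ j, r i * r j * ‖y i - y j‖) ≥ NC := by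
    rw [expand (fun i j => r i * r j * ‖x i - x j‖),
      expand (fun i j => r i * r j * ‖y i - y j‖)]
    rw [hT1y, hT4, hNCdef]
    linarith
  -- assemble
  have hpair : ∀ z : Fin n → EuclideanSpace ℝ (Fin d),
      ∑ p ∈ Finset.univ.filter (fun p : Fin n × Fin n => p.1 < p.2),
        r p.1 * r p.2 * ‖z p.1 - z p.2‖
      = (1/2) * ∑ i, ∑ j, r i * r j * ‖z i - z j‖ := by
    intro z
    apply pair_sum_half (fun i j => r i * r j * ‖z i - z j‖)
    · intro i j; rw [norm_sub_rev]; ring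
    · intro i; simp
  have hFx : F x = (1/2) * ∑ i, r i * ‖x i - a i‖^2
      + lam * ((1/2) * ∑ i, ∑ j, r i * r j * ‖x i - x j‖) := by
    rw [hF, hpair x]
  have hFy : F y = (1/2) * ∑ i, r i * ‖y i - a i‖^2
      + lam * ((1/2) * ∑ i, ∑ j, r i * r j * ‖y i - y j‖) := by
    rw [hF, hpair y]
  have hle := hmin y
  rw [hFx, hFy] at hle
  have hS0 : S ≤ 0 := by nlinarith [hlam]
  intro k hk
  have hterm : ∀ k ∈ C, 0 ≤ r k * ‖x k - m‖^2 := fun k _ =>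
    mul_nonneg (hr k).le (sq_nonneg _)
  have hz : r k * ‖x k - m‖^2 = 0 := by
    have h1 := Finset.sum_nonneg hterm
    have h2 : ∀ j ∈ C, (fun k => r k * ‖x k - m‖^2) j = 0 := by
      apply (Finset.sum_eq_zero_iff_of_nonneg hterm).mp
      exact le_antisymm hS0 h1
    exact h2 k hk
  have : ‖x k - m‖ = 0 := by
    have := (mul_eq_zero.mp hz).resolve_left (hr k).ne'
    exact pow_eq_zero_iff (by norm_num) |>.mp this
  have := norm_sub_eq_zero_iff.mp this
  exact this
end

section
/- Consider the sum-of-norms objective F(x) = (1/2)Σᵢ₌₁ⁿ rᵢ‖xᵢ−aᵢ‖² + λ Σ_{1≤i<j≤n} rᵢr_j‖xᵢ−x_j‖ with rᵢ > 0 and λ ≥ 0. Then x* is a minimizer if and only if there exist vectors δ*_{ij} ∈ ℝᵈ (1 ≤ i < j ≤ n) with δ*_{ij} = −λ(xᵢ*−x_j*)/‖xᵢ*−x_j*‖ whenever xᵢ* ≠ x_j*, ‖δ*_{ij}‖ ≤ λ whenever xᵢ* = x_j*, such that for every i: xᵢ* − aᵢ − Σ_{j=1}ⁿ r_j δ*_{⟨ij⟩}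 = 0, where δ*_{⟨ij⟩} = δ*_{ij} for i<j, −δ*_{ji} for i>j, and 0 for i=j. -/
open Finset
open scoped RealInnerProductSpace

section aux
variable {E : Type*} [NormedAddCommGroup E] [InnerProductSpace ℝ E]

lemma aux_norm_upper (z h : E) (hz : z ≠ 0) :
    ‖z + h‖ ≤ ‖z‖ + ‖z‖⁻¹ * ⟪z, h⟫ + ‖z‖⁻¹ * (‖h‖^2 / 2) := by
  have hzpos : (0:ℝ) < ‖z‖ := norm_pos_iff.mpr hz
  have hcs : |⟪z, h⟫| ≤ ‖z‖ * ‖h‖ := abs_real_inner_le_norm z h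
  have h2 : -(‖z‖ * ‖h‖) ≤ ⟪z, h⟫ := (abs_le.mp hcs).1
  have expand : ‖z + h‖^2 = ‖z‖^2 + 2*⟪z, h⟫ + ‖h‖^2 := norm_add_sq_real z h
  have hinv : (0:ℝ) < ‖z‖⁻¹ := inv_pos.mpr hzpos
  have hic : ‖z‖⁻¹ * ‖z‖ = 1 := inv_mul_cancel₀ (ne_of_gt hzpos)
  have hlow : -‖h‖ ≤ ‖z‖⁻¹ * ⟪z, h⟫ := by
    have := mul_le_mul_of_nonneg_left h2 hinv.le
    calc -‖h‖ = ‖z‖⁻¹ * (-(‖z‖ * ‖h‖)) := by field_simp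
    _ ≤ ‖z‖⁻¹ * ⟪z, h⟫ := this
  have hRHS : 0 ≤ ‖z‖ + ‖z‖⁻¹ * ⟪z, h⟫ + ‖z‖⁻¹ * (‖h‖^2 / 2) := by
    nlinarith [sq_nonneg (‖z‖ - ‖h‖), mul_pos hinv hzpos]
  have hn : (0:ℝ) ≤ ‖z + h‖ := norm_nonneg _
  have key : ‖z + h‖^2 ≤ (‖z‖ + ‖z‖⁻¹ * ⟪z, h⟫ + ‖z‖⁻¹ * (‖h‖^2 / 2))^2 := by
    nlinarith [sq_nonneg (‖z‖⁻¹ * ⟪z, h⟫ + ‖z‖⁻¹ * (‖h‖^2 / 2))]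
  nlinarith

lemma aux_pair_sum {n : ℕ} (r : Fin n → ℝ) (g : Fin n → Fin n → E)
    (hanti : ∀ i j, g i j = - g j i) (v : Fin n → E) :
    ∑ i, ⟪v i, ∑ j, r j • g i j⟫ =
      ∑ p ∈ Finset.univ.filter (fun p : Fin n × Fin n => p.1 < p.2),
        ⟪r p.2 • v p.1 - r p.1 • v p.2, g p.1 p.2⟫ := by
  have hdiag : ∀ i, g i i = 0 := by
    intro i
    have h := hanti i i
    have h2 : (2:ℝ) • g i i = 0 := by
      rw [two_smul]; nth_rewrite 1 [h]; abel
    simpa using (smul_eq_zero.mp h2).resolve_left (by norm_num)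
  have hL : ∑ i, ⟪v i, ∑ j, r j • g i j⟫
      = ∑ p ∈ (Finset.univ : Finset (Fin n × Fin n)), r p.2 * ⟪v p.1, g p.1 p.2⟫ := by
    rw [← Finset.univ_product_univ, Finset.sum_product]
    congr 1; ext i
    rw [inner_sum]
    congr 1; ext j
    rw [real_inner_smul_right]
  rw [hL]
  have hsplit := Finset.sum_filter_add_sum_filter_not (Finset.univ : Finset (Fin n × Fin n))
    (fun p => p.1 < p.2) (fun p => r p.2 * ⟪v p.1, g p.1 p.2⟫)
  rw [← hsplit]
  have hgt : ∑ p ∈ Finset.univ.filter (fun p : Fin n × Fin n => ¬ p.1 < p.2),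
      r p.2 * ⟪v p.1, g p.1 p.2⟫
      = ∑ p ∈ Finset.univ.filter (fun p : Fin n × Fin n => p.1 < p.2),
        (- (r p.1 * ⟪v p.2, g p.1 p.2⟫)) := by
    have h0 : ∑ p ∈ Finset.univ.filter (fun p : Fin n × Fin n => ¬ p.1 < p.2),
        r p.2 * ⟪v p.1, g p.1 p.2⟫
        = ∑ p ∈ Finset.univ.filter (fun p : Fin n × Fin n => p.2 < p.1),
          r p.2 * ⟪v p.1, g p.1 p.2⟫ := by
      refine (Finset.sum_subset ?_ ?_).symm
      · intro p hp
        simp only [Finset.mem_filter, Finset.mem_univ, true_and] at hp ⊢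
        exact not_lt.mpr hp.le
      · intro p hp hnp
        simp only [Finset.mem_filter, Finset.mem_univ, true_and] at hp hnp
        have : p.1 = p.2 := le_antisymm (not_lt.mp hnp) (not_lt.mp hp)
        rw [this, hdiag, inner_zero_right, mul_zero]
    rw [h0]
    refine Finset.sum_nbij' (fun p => Prod.swap p) (fun p => Prod.swap p) ?_ ?_ ?_ ?_ ?_
    · intro p hp
      simp only [Finset.mem_filter, Finset.mem_univ, true_and, Prod.fst_swap, Prod.snd_swap] at hp ⊢
      exact hp
    · intro p hp
      simp only [Finset.mem_filter, Finset.mem_univ, true_and, Prod.fst_swap, Prod.snd_swap] at hp ⊢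
      exact hp
    · intro p _; exact Prod.swap_swap p
    · intro p _; exact Prod.swap_swap p
    · intro p hp
      simp only [Prod.fst_swap, Prod.snd_swap]
      rw [hanti p.2 p.1, inner_neg_right, mul_neg, neg_neg]
  rw [hgt, ← Finset.sum_add_distrib]
  apply Finset.sum_congr rfl
  intro p hp
  rw [inner_sub_left, real_inner_smul_left, real_inner_smul_left]
  ring

end aux

/-- Backward direction of the KKT characterization. -/
lemma son_kkt_backward {n d : ℕ}
    (a : Fin n → EuclideanSpace ℝ (Fin d)) (r : Fin n → ℝ) (lam : ℝ)
    (hr : ∀ i, 0 < r i) (hlam : 0 ≤ lam)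
    (F : (Fin n → EuclideanSpace ℝ (Fin d)) → ℝ)
    (hF : ∀ x, F x = (1/2) * ∑ i, r i * ‖x i - a i‖^2 +
      lam * ∑ p ∈ Finset.univ.filter (fun p : Fin n × Fin n => p.1 < p.2),
        r p.1 * r p.2 * ‖x p.1 - x p.2‖)
    (xstar : Fin n → EuclideanSpace ℝ (Fin d))
    (δ : Fin n → Fin n → EuclideanSpace ℝ (Fin d))
    (hanti : ∀ i j, δ i j = - δ j i)
    (hforce : ∀ i j, xstar i ≠ xstar j →
      δ i j = (-(lam / ‖xstar i - xstar j‖)) • (xstar i - xstar j))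
    (hbnd : ∀ i j, i ≠ j → xstar i = xstar j → ‖δ i j‖ ≤ lam)
    (hstat : ∀ i, xstar i - a i - ∑ j, r j • δ i j = 0) :
    ∀ y, F xstar ≤ F y := by
  intro y
  rw [hF, hF]
  set x := xstar with hx
  set v : Fin n → EuclideanSpace ℝ (Fin d) := fun i => y i - x i with hv
  set P := Finset.univ.filter (fun p : Fin n × Fin n => p.1 < p.2) with hP
  -- quadratic part
  have hquad : ∀ i : Fin n, r i * ‖x i - a i‖^2 + 2*(r i * ⟪v i, x i - a i⟫)
      ≤ r i * ‖y i - a i‖^2 := by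
    intro i
    have hyi : y i - a i = (x i - a i) + v i := by simp [hv]
    rw [hyi, norm_add_sq_real]
    have := sq_nonneg ‖v i‖
    have hcomm : ⟪x i - a i, v i⟫ = ⟪v i, x i - a i⟫ := real_inner_comm _ _
    nlinarith [sq_nonneg ‖v i‖, (hr i).le, mul_nonneg (hr i).le (sq_nonneg ‖v i‖)]
  -- pair identity
  have hsum_stat : ∀ i, (∑ j, r j • δ i j) = x i - a i := by
    intro i
    have := hstat i
    have := sub_eq_zero.mp this
    exact this.symm
  have hpairid : ∑ p ∈ P, ⟪r p.2 • (r p.1 • v p.1) - r p.1 • (r p.2 • v p.2), -δ p.1 p.2⟫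
      = - ∑ i, r i * ⟪v i, x i - a i⟫ := by
    have h1 := aux_pair_sum r (fun i j => - δ i j) (fun i j => by simp [hanti i j])
      (fun i => r i • v i)
    have h2 : ∀ i : Fin n, (∑ j, r j • (-δ i j)) = -(x i - a i) := by
      intro i
      rw [← hsum_stat i]
      simp [Finset.sum_neg_distrib]
    rw [← h1]
    rw [← Finset.sum_neg_distrib]
    apply Finset.sum_congr rfl
    intro i _
    rw [h2 i, inner_neg_right, real_inner_smul_left]
  -- pair lower bound
  have hpair : ∀ p ∈ P, lam * (r p.1 * r p.2 * ‖x p.1 - x p.2‖)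
      + ⟪r p.2 • (r p.1 • v p.1) - r p.1 • (r p.2 • v p.2), -δ p.1 p.2⟫
      ≤ lam * (r p.1 * r p.2 * ‖y p.1 - y p.2‖) := by
    intro p hp
    have hpe : p.1 ≠ p.2 := by
      simp only [hP, Finset.mem_filter, Finset.mem_univ, true_and] at hp
      exact ne_of_lt hp
    set i := p.1; set j := p.2
    have hfac : r j • (r i • v i) - r i • (r j • v j) = (r i * r j) • (v i - v j) := by
      module
    rw [hfac, real_inner_smul_left]
    have hyy : y i - y j = (x i - x j) + (v i - v j) := by simp [hv]; abel
    rw [hyy]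
    set z := x i - x j with hz
    set h := v i - v j with hh
    have hrr : 0 ≤ r i * r j := mul_nonneg (hr i).le (hr j).le
    have hcore : lam * ‖z‖ + ⟪h, -δ i j⟫ ≤ lam * ‖z + h‖ := by
      by_cases hzz : x i = x j
      · have hz0 : z = 0 := by rw [hz, hzz]; abel
        have hd := hbnd i j hpe hzz
        have hcs : ⟪h, -δ i j⟫ ≤ ‖h‖ * ‖δ i j‖ := by
          calc ⟪h, -δ i j⟫ ≤ ‖h‖ * ‖-δ i j‖ := real_inner_le_norm h (-δ i j)
          _ = ‖h‖ * ‖δ i j‖ := by rw [norm_neg]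
        have hnz : ‖z + h‖ = ‖h‖ := by rw [hz0, zero_add]
        rw [hnz, hz0, norm_zero]
        nlinarith [norm_nonneg h, norm_nonneg (δ i j)]
      · have hzne : z ≠ 0 := sub_ne_zero.mpr hzz
        have hznorm : (0:ℝ) < ‖z‖ := norm_pos_iff.mpr hzne
        rw [hforce i j hzz, ← hz]
        rw [neg_smul, inner_neg_right, inner_neg_right, neg_neg, real_inner_smul_right]
        have hcs : ⟪z + h, z⟫ ≤ ‖z + h‖ * ‖z‖ := real_inner_le_norm _ _
        have hexp : ⟪z + h, z⟫ = ‖z‖^2 + ⟪h, z⟫ := by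
          rw [inner_add_left, real_inner_self_eq_norm_sq]
        have hinner : ⟪h, z⟫ = ⟪z, h⟫ := real_inner_comm _ _
        have hldiv : 0 ≤ lam / ‖z‖ := div_nonneg hlam hznorm.le
        have key : ‖z‖^2 + ⟪h, z⟫ ≤ ‖z + h‖ * ‖z‖ := by rw [← hexp]; exact hcs
        calc lam * ‖z‖ + lam / ‖z‖ * ⟪h, z⟫
            = lam / ‖z‖ * (‖z‖^2 + ⟪h, z⟫) := by field_simp
          _ ≤ lam / ‖z‖ * (‖z + h‖ * ‖z‖) := mul_le_mul_of_nonneg_left key hldiv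
          _ = lam * ‖z + h‖ := by field_simp
    have h3 := mul_le_mul_of_nonneg_left hcore hrr
    ring_nf at h3 ⊢
    linarith [h3]
  have hpairsum : lam * ∑ p ∈ P, r p.1 * r p.2 * ‖x p.1 - x p.2‖
      + ∑ p ∈ P, ⟪r p.2 • (r p.1 • v p.1) - r p.1 • (r p.2 • v p.2), -δ p.1 p.2⟫
      ≤ lam * ∑ p ∈ P, r p.1 * r p.2 * ‖y p.1 - y p.2‖ := by
    rw [Finset.mul_sum, Finset.mul_sum, ← Finset.sum_add_distrib]
    exact Finset.sum_le_sum hpair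
  rw [hpairid] at hpairsum
  have hquadsum : ∑ i, r i * ‖x i - a i‖^2 + 2 * ∑ i, r i * ⟪v i, x i - a i⟫
      ≤ ∑ i, r i * ‖y i - a i‖^2 := by
    rw [Finset.mul_sum, ← Finset.sum_add_distrib]
    exact Finset.sum_le_sum (fun i _ => hquad i)
  linarith

open scoped Classical in
lemma son_star {n d : ℕ}
    (a : Fin n → EuclideanSpace ℝ (Fin d)) (r : Fin n → ℝ) (lam : ℝ)
    (hr : ∀ i, 0 < r i) (hlam : 0 ≤ lam)
    (F : (Fin n → EuclideanSpace ℝ (Fin d)) → ℝ)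
    (hF : ∀ x, F x = (1/2) * ∑ i, r i * ‖x i - a i‖^2 +
      lam * ∑ p ∈ Finset.univ.filter (fun p : Fin n × Fin n => p.1 < p.2),
        r p.1 * r p.2 * ‖x p.1 - x p.2‖)
    (x : Fin n → EuclideanSpace ℝ (Fin d))
    (hmin : ∀ y, F x ≤ F y)
    (v : Fin n → EuclideanSpace ℝ (Fin d)) :
    0 ≤ ∑ i, r i * ⟪x i - a i, v i⟫ +
      lam * ∑ p ∈ Finset.univ.filter (fun p : Fin n × Fin n => p.1 < p.2),
        r p.1 * r p.2 *
          (if x p.1 = x p.2 then ‖v p.1 - v p.2‖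
           else ‖x p.1 - x p.2‖⁻¹ * ⟪x p.1 - x p.2, v p.1 - v p.2⟫) := by
  classical
  set P := Finset.univ.filter (fun p : Fin n × Fin n => p.1 < p.2) with hP
  set S := ∑ i, r i * ⟪x i - a i, v i⟫ with hS
  set V := ∑ i, r i * ‖v i‖^2 with hV
  set Φ := ∑ p ∈ P, r p.1 * r p.2 *
      (if x p.1 = x p.2 then ‖v p.1 - v p.2‖
       else ‖x p.1 - x p.2‖⁻¹ * ⟪x p.1 - x p.2, v p.1 - v p.2⟫) with hΦ
  set Ψ := ∑ p ∈ P, r p.1 * r p.2 *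
      (if x p.1 = x p.2 then 0
       else ‖x p.1 - x p.2‖⁻¹ * (‖v p.1 - v p.2‖^2 / 2)) with hΨ
  set A := S + lam * Φ with hA
  set K := (1/2) * V + lam * Ψ with hK
  show 0 ≤ A
  have hV0 : 0 ≤ V := Finset.sum_nonneg (fun i _ => mul_nonneg (hr i).le (sq_nonneg _))
  have hΨ0 : 0 ≤ Ψ := by
    apply Finset.sum_nonneg
    intro p _
    apply mul_nonneg (mul_nonneg (hr p.1).le (hr p.2).le)
    by_cases he : x p.1 = x p.2
    · rw [if_pos he]
    · rw [if_neg he]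
      positivity
  have hK0 : 0 ≤ K := by
    rw [hK]
    have := mul_nonneg hlam hΨ0
    linarith
  have key : ∀ t : ℝ, 0 < t → 0 ≤ A + t * K := by
    intro t ht
    have h1 := hmin (fun i => x i + t • v i)
    rw [hF, hF] at h1
    have hq : ∑ i, r i * ‖(fun i => x i + t • v i) i - a i‖^2
        = ∑ i, r i * ‖x i - a i‖^2 + t * (2 * S) + t^2 * V := by
      rw [hS, Finset.mul_sum, Finset.mul_sum, Finset.mul_sum, ← Finset.sum_add_distrib,
        ← Finset.sum_add_distrib]
      apply Finset.sum_congr rfl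
      intro i _
      simp only
      have hrw : (x i + t • v i) - a i = (x i - a i) + t • v i := by abel
      rw [hrw, norm_add_sq_real, real_inner_smul_right, norm_smul, Real.norm_eq_abs,
        mul_pow, sq_abs]
      ring
    have hp2 : ∑ p ∈ P, r p.1 * r p.2 * ‖(fun i => x i + t • v i) p.1 -
          (fun i => x i + t • v i) p.2‖
        ≤ ∑ p ∈ P, r p.1 * r p.2 * ‖x p.1 - x p.2‖ + t * Φ + t^2 * Ψ := by
      rw [hΦ, hΨ, Finset.mul_sum, Finset.mul_sum, ← Finset.sum_add_distrib,
        ← Finset.sum_add_distrib]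
      apply Finset.sum_le_sum
      intro p _
      simp only
      have hrr : (0:ℝ) ≤ r p.1 * r p.2 := mul_nonneg (hr p.1).le (hr p.2).le
      have hdf : (x p.1 + t • v p.1) - (x p.2 + t • v p.2)
          = (x p.1 - x p.2) + t • (v p.1 - v p.2) := by
        rw [smul_sub]; abel
      rw [hdf]
      by_cases he : x p.1 = x p.2
      · rw [if_pos he, if_pos he]
        have hz0 : x p.1 - x p.2 = 0 := sub_eq_zero.mpr he
        rw [hz0, zero_add, norm_smul, Real.norm_eq_abs, abs_of_pos ht, norm_zero]
        ring_nf
        nlinarith [norm_nonneg (v p.1 - v p.2)]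
      · rw [if_neg he, if_neg he]
        have hub := aux_norm_upper (x p.1 - x p.2) (t • (v p.1 - v p.2))
          (sub_ne_zero.mpr he)
        rw [real_inner_smul_right, norm_smul, Real.norm_eq_abs, mul_pow, sq_abs] at hub
        have := mul_le_mul_of_nonneg_left hub hrr
        ring_nf at this ⊢
        linarith
    have h2 : F x ≤ F x + t * (A + t * K) := by
      calc F x ≤ F (fun i => x i + t • v i) := hmin _
      _ = (1/2) * (∑ i, r i * ‖x i - a i‖^2 + t * (2 * S) + t^2 * V) +
          lam * ∑ p ∈ P, r p.1 * r p.2 * ‖(fun i => x i + t • v i) p.1 -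
            (fun i => x i + t • v i) p.2‖ := by rw [hF, hq]
      _ ≤ (1/2) * (∑ i, r i * ‖x i - a i‖^2 + t * (2 * S) + t^2 * V) +
          lam * (∑ p ∈ P, r p.1 * r p.2 * ‖x p.1 - x p.2‖ + t * Φ + t^2 * Ψ) := by
        have := mul_le_mul_of_nonneg_left hp2 hlam
        linarith
      _ = F x + t * (A + t * K) := by rw [hF, hA, hK]; ring
    have h3 : 0 ≤ t * (A + t * K) := by linarith
    by_contra hneg
    push_neg at hneg
    have := mul_neg_of_pos_of_neg ht hneg
    linarith
  by_contra hAneg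
  push_neg at hAneg
  have hK1 : (0:ℝ) < K + 1 := by linarith
  have ht0 : 0 < -A / (K + 1) := div_pos (by linarith) hK1
  have h5 := key _ ht0
  have hfr : -A / (K + 1) * K < -A := by
    rw [div_mul_eq_mul_div, div_lt_iff₀ hK1]
    nlinarith
  linarith

open scoped Classical in
lemma son_kkt_forward {n d : ℕ}
    (a : Fin n → EuclideanSpace ℝ (Fin d)) (r : Fin n → ℝ) (lam : ℝ)
    (hr : ∀ i, 0 < r i) (hlam : 0 ≤ lam)
    (F : (Fin n → EuclideanSpace ℝ (Fin d)) → ℝ)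
    (hF : ∀ x, F x = (1/2) * ∑ i, r i * ‖x i - a i‖^2 +
      lam * ∑ p ∈ Finset.univ.filter (fun p : Fin n × Fin n => p.1 < p.2),
        r p.1 * r p.2 * ‖x p.1 - x p.2‖)
    (x : Fin n → EuclideanSpace ℝ (Fin d))
    (hmin : ∀ y, F x ≤ F y) :
    ∃ δ : Fin n → Fin n → EuclideanSpace ℝ (Fin d),
      (∀ i, δ i i = 0) ∧
      (∀ i j, δ i j = - δ j i) ∧
      (∀ i j, x i ≠ x j →
        δ i j = (-(lam / ‖x i - x j‖)) • (x i - x j)) ∧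
      (∀ i j, i ≠ j → x i = x j → ‖δ i j‖ ≤ lam) ∧
      (∀ i, x i - a i - ∑ j, r j • δ i j = 0) := by
  classical
  set P := Finset.univ.filter (fun p : Fin n × Fin n => p.1 < p.2) with hP
  set D : Set (Fin n → Fin n → EuclideanSpace ℝ (Fin d)) :=
    {δ | (∀ i, δ i i = 0) ∧ (∀ i j, δ i j = - δ j i) ∧
      (∀ i j, x i ≠ x j → δ i j = (-(lam / ‖x i - x j‖)) • (x i - x j)) ∧
      (∀ i j, i ≠ j → x i = x j → ‖δ i j‖ ≤ lam)} with hD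
  set Llin : (Fin n → Fin n → EuclideanSpace ℝ (Fin d)) →ₗ[ℝ]
      (Fin n → EuclideanSpace ℝ (Fin d)) :=
    { toFun := fun δ i => ∑ j, r j • δ i j
      map_add' := by
        intro δ1 δ2
        funext i
        simp [smul_add, Finset.sum_add_distrib]
      map_smul' := by
        intro c δ
        funext i
        simp only [Pi.smul_apply, RingHom.id_apply]
        rw [Finset.smul_sum]
        apply Finset.sum_congr rfl
        intro j _
        rw [smul_comm] } with hLlin
  suffices hmem : (fun i => x i - a i) ∈ Llin '' D by
    obtain ⟨δ, hδ, hLδ⟩ := hmem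
    refine ⟨δ, hδ.1, hδ.2.1, hδ.2.2.1, hδ.2.2.2, fun i => ?_⟩
    have h0 : (∑ j, r j • δ i j) = x i - a i := congrFun hLδ i
    rw [h0, sub_self]
  by_contra hnot
  -- D is convex
  have hDconv : Convex ℝ D := by
    intro δ1 h1 δ2 h2 c1 c2 hc1 hc2 hcs
    obtain ⟨h1a, h1b, h1c, h1d⟩ := h1
    obtain ⟨h2a, h2b, h2c, h2d⟩ := h2
    refine ⟨?_, ?_, ?_, ?_⟩
    · intro i
      simp [h1a i, h2a i]
    · intro i j
      simp only [Pi.add_apply, Pi.smul_apply]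
      rw [h1b i j, h2b i j]
      module
    · intro i j hne
      simp only [Pi.add_apply, Pi.smul_apply]
      rw [h1c i j hne, h2c i j hne, ← add_smul, hcs, one_smul]
    · intro i j hne heq
      simp only [Pi.add_apply, Pi.smul_apply]
      calc ‖c1 • δ1 i j + c2 • δ2 i j‖ ≤ ‖c1 • δ1 i j‖ + ‖c2 • δ2 i j‖ := norm_add_le _ _
      _ = c1 * ‖δ1 i j‖ + c2 * ‖δ2 i j‖ := by
        rw [norm_smul, norm_smul, Real.norm_eq_abs, Real.norm_eq_abs,
          abs_of_nonneg hc1, abs_of_nonneg hc2]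
      _ ≤ c1 * lam + c2 * lam := add_le_add
          (mul_le_mul_of_nonneg_left (h1d i j hne heq) hc1)
          (mul_le_mul_of_nonneg_left (h2d i j hne heq) hc2)
      _ = lam := by rw [← add_mul, hcs, one_mul]
  have hTconv : Convex ℝ (Llin '' D) := hDconv.linear_image Llin
  -- D is bounded
  have hDb : Bornology.IsBounded D := by
    rw [isBounded_iff_forall_norm_le]
    refine ⟨lam, fun δ hδ => ?_⟩
    obtain ⟨ha', hb', hc', hd'⟩ := hδ
    rw [pi_norm_le_iff_of_nonneg hlam]
    intro i
    rw [pi_norm_le_iff_of_nonneg hlam]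
    intro j
    by_cases hij : i = j
    · subst hij
      rw [ha' i, norm_zero]
      exact hlam
    · by_cases heq : x i = x j
      · exact hd' i j hij heq
      · have hz : ‖x i - x j‖ ≠ 0 := norm_ne_zero_iff.mpr (sub_ne_zero.mpr heq)
        have : ‖(-(lam / ‖x i - x j‖)) • (x i - x j)‖ = lam := by
          rw [norm_smul, Real.norm_eq_abs, abs_neg, abs_div, abs_of_nonneg hlam,
            abs_of_nonneg (norm_nonneg _), div_mul_cancel₀ _ hz]
        rw [hc' i j heq, this]
  -- D is closed
  have hev : ∀ i j, Continuous (fun δ : Fin n → Fin n → EuclideanSpace ℝ (Fin d) => δ i j) :=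
    fun i j => (continuous_apply j).comp (continuous_apply i)
  have hDc : IsClosed D := by
    have e1 : D = (⋂ i, {δ : Fin n → Fin n → EuclideanSpace ℝ (Fin d) | δ i i = 0}) ∩
        ((⋂ i, ⋂ j, {δ : Fin n → Fin n → EuclideanSpace ℝ (Fin d) | δ i j = - δ j i}) ∩
        ((⋂ i, ⋂ j, {δ : Fin n → Fin n → EuclideanSpace ℝ (Fin d) |
            x i ≠ x j → δ i j = (-(lam / ‖x i - x j‖)) • (x i - x j)}) ∩
         (⋂ i, ⋂ j, {δ : Fin n → Fin n → EuclideanSpace ℝ (Fin d) |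
            i ≠ j → x i = x j → ‖δ i j‖ ≤ lam}))) := by
      ext δ
      simp only [hD, Set.mem_setOf_eq, Set.mem_inter_iff, Set.mem_iInter]
      try tauto
    rw [e1]
    refine IsClosed.inter (isClosed_iInter fun i => isClosed_eq (hev i i) continuous_const)
      (IsClosed.inter (isClosed_iInter fun i => isClosed_iInter fun j =>
        isClosed_eq (hev i j) (hev j i).neg)
      (IsClosed.inter ?_ ?_))
    · refine isClosed_iInter fun i => isClosed_iInter fun j => ?_
      by_cases heq : x i = x j
      · have : {δ : Fin n → Fin n → EuclideanSpace ℝ (Fin d) |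
            x i ≠ x j → δ i j = (-(lam / ‖x i - x j‖)) • (x i - x j)} = Set.univ := by
          ext δ; simp [heq]
        rw [this]; exact isClosed_univ
      · have : {δ : Fin n → Fin n → EuclideanSpace ℝ (Fin d) |
            x i ≠ x j → δ i j = (-(lam / ‖x i - x j‖)) • (x i - x j)}
            = {δ | δ i j = (-(lam / ‖x i - x j‖)) • (x i - x j)} := by
          ext δ; simp [heq]
        rw [this]; exact isClosed_eq (hev i j) continuous_const
    · refine isClosed_iInter fun i => isClosed_iInter fun j => ?_
      by_cases hij : i = j
      · have : {δ : Fin n → Fin n → EuclideanSpace ℝ (Fin d) |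
            i ≠ j → x i = x j → ‖δ i j‖ ≤ lam} = Set.univ := by
          ext δ; simp [hij]
        rw [this]; exact isClosed_univ
      · by_cases heq : x i = x j
        · have : {δ : Fin n → Fin n → EuclideanSpace ℝ (Fin d) |
              i ≠ j → x i = x j → ‖δ i j‖ ≤ lam} = {δ | ‖δ i j‖ ≤ lam} := by
            ext δ; simp [hij, heq]
          rw [this]
          exact isClosed_le (hev i j).norm continuous_const
        · have : {δ : Fin n → Fin n → EuclideanSpace ℝ (Fin d) |
              i ≠ j → x i = x j → ‖δ i j‖ ≤ lam} = Set.univ := by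
            ext δ; simp [hij, heq]
          rw [this]; exact isClosed_univ
  have hDcomp : IsCompact D := Metric.isCompact_of_isClosed_isBounded hDc hDb
  have hLcont : Continuous Llin := by
    have hco : ⇑Llin = fun (δ : Fin n → Fin n → EuclideanSpace ℝ (Fin d)) (i : Fin n) =>
        ∑ j, r j • δ i j := rfl
    rw [hco]
    exact continuous_pi fun i =>
      continuous_finset_sum _ fun j _ => ((hev i j).const_smul (r j))
  have hTclosed : IsClosed (Llin '' D) := (hDcomp.image hLcont).isClosed
  obtain ⟨f, u, hfu, hux⟩ := geometric_hahn_banach_closed_point hTconv hTclosed hnot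
  -- Riesz representatives
  set w : Fin n → EuclideanSpace ℝ (Fin d) := fun i =>
    (InnerProductSpace.toDual ℝ (EuclideanSpace ℝ (Fin d))).symm
      (f.comp ((LinearMap.single ℝ (fun _ : Fin n => EuclideanSpace ℝ (Fin d))
        i).toContinuousLinearMap)) with hw
  have hwspec : ∀ i (e : EuclideanSpace ℝ (Fin d)), ⟪w i, e⟫ = f (Pi.single i e) := by
    intro i e
    rw [hw]
    simp only
    rw [InnerProductSpace.toDual_symm_apply]
    rfl
  have hfs : ∀ s : Fin n → EuclideanSpace ℝ (Fin d), f s = ∑ i, ⟪w i, s i⟫ := by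
    intro s
    conv_lhs => rw [← Finset.univ_sum_single s]
    rw [map_sum]
    exact Finset.sum_congr rfl (fun i _ => (hwspec i (s i)).symm)
  -- the maximizing dual element
  set m : Fin n → Fin n → EuclideanSpace ℝ (Fin d) :=
    fun i j => r j • w i - r i • w j with hm
  have hmanti : ∀ i j, m j i = - m i j := by
    intro i j
    rw [hm]
    module
  set δhat : Fin n → Fin n → EuclideanSpace ℝ (Fin d) := fun i j =>
    if x i = x j then (if m i j = 0 then 0 else (lam * ‖m i j‖⁻¹) • m i j)
    else (-(lam / ‖x i - x j‖)) • (x i - x j) with hδhat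
  have hδdiag : ∀ i, δhat i i = 0 := by
    intro i
    have hmii : m i i = 0 := by rw [hm]; simp
    simp [hδhat, hmii]
  have hδanti : ∀ i j, δhat i j = - δhat j i := by
    intro i j
    rw [hδhat]
    simp only
    by_cases heq : x i = x j
    · rw [if_pos heq, if_pos heq.symm]
      by_cases hm0 : m i j = 0
      · have hm0' : m j i = 0 := by rw [hmanti, hm0, neg_zero]
        rw [if_pos hm0, if_pos hm0', neg_zero]
      · have hm0' : m j i ≠ 0 := by rw [hmanti]; simpa using hm0
        rw [if_neg hm0, if_neg hm0', hmanti i j, norm_neg, smul_neg, neg_neg]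
    · have heq' : ¬ x j = x i := fun h => heq h.symm
      rw [if_neg heq, if_neg heq', norm_sub_rev (x j) (x i)]
      module
  have hδforce : ∀ i j, x i ≠ x j → δhat i j = (-(lam / ‖x i - x j‖)) • (x i - x j) := by
    intro i j hne
    rw [hδhat]
    simp only [if_neg hne]
  have hδbnd : ∀ i j, i ≠ j → x i = x j → ‖δhat i j‖ ≤ lam := by
    intro i j _ heq
    rw [hδhat]
    simp only [if_pos heq]
    by_cases hm0 : m i j = 0
    · rw [if_pos hm0, norm_zero]; exact hlam
    · rw [if_neg hm0, norm_smul, Real.norm_eq_abs,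
        abs_of_nonneg (mul_nonneg hlam (inv_nonneg.mpr (norm_nonneg _))),
        mul_assoc, inv_mul_cancel₀ (norm_ne_zero_iff.mpr hm0), mul_one]
  have hδD : δhat ∈ D := ⟨hδdiag, hδanti, hδforce, hδbnd⟩
  have h1 : f (Llin δhat) < u := hfu _ ⟨δhat, hδD, rfl⟩
  -- value of f on Llin δhat
  have hfL : f (Llin δhat) = ∑ p ∈ P,
      (if x p.1 = x p.2 then lam * ‖m p.1 p.2‖
       else (-(lam / ‖x p.1 - x p.2‖)) * ⟪m p.1 p.2, x p.1 - x p.2⟫) := by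
    rw [hfs]
    have hL : ∀ i, Llin δhat i = ∑ j, r j • δhat i j := fun i => rfl
    have e0 : ∑ i, ⟪w i, Llin δhat i⟫ = ∑ i, ⟪w i, ∑ j, r j • δhat i j⟫ := by
      exact Finset.sum_congr rfl (fun i _ => by rw [hL])
    rw [e0, aux_pair_sum r δhat hδanti w]
    apply Finset.sum_congr rfl
    intro p hp
    rw [hδhat]
    simp only
    by_cases heq : x p.1 = x p.2
    · rw [if_pos heq, if_pos heq]
      by_cases hm0 : m p.1 p.2 = 0
      · rw [if_pos hm0]
        have : r p.2 • w p.1 - r p.1 • w p.2 = m p.1 p.2 := rfl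
        rw [this, hm0]
        simp
      · rw [if_neg hm0]
        have hmr : r p.2 • w p.1 - r p.1 • w p.2 = m p.1 p.2 := rfl
        rw [hmr, real_inner_smul_right, real_inner_self_eq_norm_sq]
        have hnm : ‖m p.1 p.2‖ ≠ 0 := norm_ne_zero_iff.mpr hm0
        field_simp
    · rw [if_neg heq, if_neg heq]
      have hmr : r p.2 • w p.1 - r p.1 • w p.2 = m p.1 p.2 := rfl
      rw [hmr, real_inner_smul_right]
  -- apply the directional inequality with v i = -(r i)⁻¹ • w i
  set v' : Fin n → EuclideanSpace ℝ (Fin d) := fun i => (-(r i)⁻¹) • w i with hv'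
  have hv := son_star a r lam hr hlam F hF x hmin v'
  rw [← hP] at hv
  have e1 : ∑ i, r i * ⟪x i - a i, v' i⟫ = - ∑ i, ⟪w i, x i - a i⟫ := by
    rw [← Finset.sum_neg_distrib]
    apply Finset.sum_congr rfl
    intro i _
    simp only [hv']
    rw [real_inner_smul_right, real_inner_comm (x i - a i) (w i)]
    have : r i ≠ 0 := (hr i).ne'
    field_simp
  have e2 : lam * ∑ p ∈ P, r p.1 * r p.2 *
      (if x p.1 = x p.2 then ‖v' p.1 - v' p.2‖
       else ‖x p.1 - x p.2‖⁻¹ * ⟪x p.1 - x p.2, v' p.1 - v' p.2⟫)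
      = ∑ p ∈ P,
      (if x p.1 = x p.2 then lam * ‖m p.1 p.2‖
       else (-(lam / ‖x p.1 - x p.2‖)) * ⟪m p.1 p.2, x p.1 - x p.2⟫) := by
    rw [Finset.mul_sum]
    apply Finset.sum_congr rfl
    intro p hp
    simp only [hv']
    have hr1 : r p.1 ≠ 0 := (hr p.1).ne'
    have hr2 : r p.2 ≠ 0 := (hr p.2).ne'
    have hrr : (0:ℝ) < r p.1 * r p.2 := mul_pos (hr p.1) (hr p.2)
    have hkey : (r p.1 * r p.2) • ((-(r p.1)⁻¹) • w p.1 - (-(r p.2)⁻¹) • w p.2)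
        = - m p.1 p.2 := by
      rw [hm]
      match_scalars <;> (field_simp; try ring)
    by_cases heq : x p.1 = x p.2
    · rw [if_pos heq, if_pos heq]
      have h5 : r p.1 * r p.2 * ‖(-(r p.1)⁻¹) • w p.1 - (-(r p.2)⁻¹) • w p.2‖
          = ‖m p.1 p.2‖ := by
        rw [← abs_of_pos hrr, ← Real.norm_eq_abs, ← norm_smul, hkey, norm_neg]
      rw [h5]
    · rw [if_neg heq, if_neg heq]
      have h6 : (r p.1 * r p.2) * ⟪x p.1 - x p.2, (-(r p.1)⁻¹) • w p.1 - (-(r p.2)⁻¹) • w p.2⟫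
          = - ⟪m p.1 p.2, x p.1 - x p.2⟫ := by
        rw [← real_inner_smul_right, hkey, inner_neg_right,
          real_inner_comm]
      calc lam * (r p.1 * r p.2 * (‖x p.1 - x p.2‖⁻¹ *
            ⟪x p.1 - x p.2, (-(r p.1)⁻¹) • w p.1 - (-(r p.2)⁻¹) • w p.2⟫))
          = lam * ‖x p.1 - x p.2‖⁻¹ * ((r p.1 * r p.2) *
            ⟪x p.1 - x p.2, (-(r p.1)⁻¹) • w p.1 - (-(r p.2)⁻¹) • w p.2⟫) := by ring
        _ = lam * ‖x p.1 - x p.2‖⁻¹ * (- ⟪m p.1 p.2, x p.1 - x p.2⟫) := by rw [h6]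
        _ = (-(lam / ‖x p.1 - x p.2‖)) * ⟪m p.1 p.2, x p.1 - x p.2⟫ := by
            rw [div_eq_mul_inv]; ring
  rw [e1, e2] at hv
  have h2 : u < ∑ i, ⟪w i, x i - a i⟫ := by
    rw [hfs] at hux
    exact hux
  rw [hfL] at h1
  linarith


/-- First-order (KKT) characterization of minimizers of the sum-of-norms
clustering objective with multiplicative weights. -/
theorem son_kkt_characterization {n d : ℕ}
    (a : Fin n → EuclideanSpace ℝ (Fin d)) (r : Fin n → ℝ) (lam : ℝ)
    (hr : ∀ i, 0 < r i) (hlam : 0 ≤ lam)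
    (F : (Fin n → EuclideanSpace ℝ (Fin d)) → ℝ)
    (hF : ∀ x, F x = (1/2) * ∑ i, r i * ‖x i - a i‖^2 +
      lam * ∑ p ∈ Finset.univ.filter (fun p : Fin n × Fin n => p.1 < p.2),
        r p.1 * r p.2 * ‖x p.1 - x p.2‖)
    (xstar : Fin n → EuclideanSpace ℝ (Fin d)) :
    (∀ y, F xstar ≤ F y) ↔
      ∃ δ : Fin n → Fin n → EuclideanSpace ℝ (Fin d),
        (∀ i, δ i i = 0) ∧
        (∀ i j, δ i j = - δ j i) ∧
        (∀ i j, xstar i ≠ xstar j →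
          δ i j = (-(lam / ‖xstar i - xstar j‖)) • (xstar i - xstar j)) ∧
        (∀ i j, i ≠ j → xstar i = xstar j → ‖δ i j‖ ≤ lam) ∧
        (∀ i, xstar i - a i - ∑ j, r j • δ i j = 0) := by
  constructor
  · intro hmin
    exact son_kkt_forward a r lam hr hlam F hF xstar hmin
  · rintro ⟨δ, hdiag, hanti, hforce, hbnd, hstat⟩
    exact son_kkt_backward a r lam hr hlam F hF xstar δ hanti hforce hbnd hstat
end

section
/- Let y, δ ∈ ℝᵈ, t, λ > 0 with t ≥ ‖y‖ and λ ≥ ‖δ‖. If tλ + ⟨y, δ⟩ ≤ μ, then ‖t·δ + λ·y‖ ≤ √(2tλμ). -/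
/-! Expanding the square, the cone conditions bound both diagonal terms `t²‖δ‖²` and `λ²‖y‖²`
by `t²λ²`, so `‖t • δ + λ • y‖² ≤ 2tλ(tλ + ⟪y, δ⟫) ≤ 2tλμ`. -/

theorem norm_smul_add_smul_sq_le_of_norm_le {E : Type*} [NormedAddCommGroup E]
    [InnerProductSpace ℝ E] {t lam : ℝ} {y δ : E} (ht : ‖y‖ ≤ t) (hδ : ‖δ‖ ≤ lam) :
    ‖t • δ + lam • y‖ ^ 2 ≤ 2 * t * lam * (t * lam + inner ℝ y δ) := by
  have ht₀ : 0 ≤ t := (norm_nonneg y).trans ht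
  have hlam₀ : 0 ≤ lam := (norm_nonneg δ).trans hδ
  have hexpand : ‖t • δ + lam • y‖ ^ 2
      = t ^ 2 * ‖δ‖ ^ 2 + 2 * t * lam * inner ℝ y δ + lam ^ 2 * ‖y‖ ^ 2 := by
    rw [norm_add_sq_real, norm_smul, norm_smul, real_inner_smul_left, real_inner_smul_right,
      real_inner_comm, Real.norm_of_nonneg ht₀, Real.norm_of_nonneg hlam₀]
    ring
  have hδsq : ‖δ‖ ^ 2 ≤ lam ^ 2 := pow_le_pow_left₀ (norm_nonneg δ) hδ 2
  have hysq : ‖y‖ ^ 2 ≤ t ^ 2 := pow_le_pow_left₀ (norm_nonneg y) ht 2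
  rw [hexpand]
  linarith [mul_le_mul_of_nonneg_left hδsq (sq_nonneg t),
    mul_le_mul_of_nonneg_left hysq (sq_nonneg lam)]

theorem socp_pair_bound_general {d : ℕ} (t lam μ : ℝ) (y δ : EuclideanSpace ℝ (Fin d))
    (ht : ‖y‖ ≤ t) (hδ : ‖δ‖ ≤ lam)
    (hgap : t * lam + (inner ℝ y δ : ℝ) ≤ μ) :
    ‖t • δ + lam • y‖ ≤ Real.sqrt (2 * t * lam * μ) := by
  have htlam : 0 ≤ 2 * t * lam := by
    have := (norm_nonneg y).trans ht
    have := (norm_nonneg δ).trans hδ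
    positivity
  refine Real.le_sqrt_of_sq_le ?_
  calc ‖t • δ + lam • y‖ ^ 2 ≤ 2 * t * lam * (t * lam + inner ℝ y δ) :=
        norm_smul_add_smul_sq_le_of_norm_le ht hδ
    _ ≤ 2 * t * lam * μ := mul_le_mul_of_nonneg_left hgap htlam

/-- Second-order-cone near-complementarity bound for the pair ((t,y),(λ,δ)). -/
theorem socp_pair_bound {d : ℕ} (t lam μ : ℝ) (y δ : EuclideanSpace ℝ (Fin d))
    (htpos : 0 < t) (hlampos : 0 < lam)
    (ht : ‖y‖ ≤ t) (hδ : ‖δ‖ ≤ lam)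
    (hgap : t * lam + (inner ℝ y δ : ℝ) ≤ μ) :
    ‖t • δ + lam • y‖ ≤ Real.sqrt (2 * t * lam * μ) :=
  socp_pair_bound_general t lam μ y δ ht hδ hgap
end

section
/- Let a₁,…,aₙ ∈ ℝᵈ, r₁,…,rₙ > 0, C ⊆ {1,…,n}, r' = Σ_{i∈C} r_i. Suppose for every i ∈ {1,…,n}: −x_i + a_i + ω_i + Σ_{j=1}ⁿ r_j δ_{⟨ij⟩} = 0, where δ_{⟨·⟩} is antisymmetric. Define q_{⟨ij⟩} for i, j ∈ C as q_{⟨ij⟩} = −δ_{⟨ij⟩} + (1/r')(x_i − x_j − ω_i + ω_j) − (1/r')Σ_{k∉C} r_k(δ_{⟨ik⟩} − δ_{⟨jk⟩}). Then for every i ∈ C: a_i − (1/r')Σ_{l∈C} r_l a_l = Σ_{j∈C} r_j q_{⟨ij⟩}. -/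
open Finset

/-- The perturbed stationarity conditions imply that the constructed CGR
subgradients satisfy the exact linear system for the candidate cluster C. -/
theorem cgr_linear_system {n d : ℕ} (C : Finset (Fin n)) (hC : C.Nonempty)
    (r : Fin n → ℝ) (hr : ∀ i, 0 < r i)
    (a x ω : Fin n → EuclideanSpace ℝ (Fin d))
    (δ : Fin n → Fin n → EuclideanSpace ℝ (Fin d))
    (hzero : ∀ i, δ i i = 0) (hanti : ∀ i j, δ i j = - δ j i)
    (hstat : ∀ i, -x i + a i + ω i + ∑ j, r j • δ i j = 0)
    (q : Fin n → Fin n → EuclideanSpace ℝ (Fin d))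
    (hq : ∀ i ∈ C, ∀ j ∈ C, q i j =
      -δ i j + ((∑ l ∈ C, r l)⁻¹) • (x i - x j - ω i + ω j)
        - ((∑ l ∈ C, r l)⁻¹) • ∑ k ∈ Finset.univ \ C, r k • (δ i k - δ j k)) :
    ∀ i ∈ C, a i - ((∑ l ∈ C, r l)⁻¹) • ∑ l ∈ C, r l • a l
      = ∑ j ∈ C, r j • q i j := by
  intro i hi
  have hr' : (0:ℝ) < ∑ l ∈ C, r l := Finset.sum_pos (fun l _ => hr l) hC
  set s : ℝ := ∑ l ∈ C, r l with hs
  set D : Finset (Fin n) := Finset.univ \ C with hD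
  -- stationarity rewritten, with the universe sum split over C and its complement
  have hsplit : ∀ k, (∑ j, r j • δ k j)
      = ∑ j ∈ C, r j • δ k j + ∑ j ∈ D, r j • δ k j := by
    intro k
    rw [add_comm, hD, Finset.sum_sdiff (Finset.subset_univ C)]
  have ha : ∀ k, a k = x k - ω k - (∑ j ∈ C, r j • δ k j)
      - ∑ j ∈ D, r j • δ k j := by
    intro k
    have h := hstat k
    have h2 : a k - (x k - ω k - (∑ j ∈ C, r j • δ k j) - ∑ j ∈ D, r j • δ k j)
        = -x k + a k + ω k + ∑ j, r j • δ k j := by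
      rw [hsplit k]; abel
    rw [h] at h2
    exact sub_eq_zero.mp h2
  -- the double sum over C × C vanishes by antisymmetry
  have hdz : ∑ l ∈ C, r l • ∑ j ∈ C, r j • δ l j = 0 := by
    have h1 : ∑ l ∈ C, r l • ∑ j ∈ C, r j • δ l j
        = - ∑ l ∈ C, r l • ∑ j ∈ C, r j • δ l j := by
      calc ∑ l ∈ C, r l • ∑ j ∈ C, r j • δ l j
          = ∑ l ∈ C, ∑ j ∈ C, r l • r j • δ l j := by
            exact Finset.sum_congr rfl fun l _ => Finset.smul_sum
        _ = ∑ j ∈ C, ∑ l ∈ C, r l • r j • δ l j := Finset.sum_comm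
        _ = ∑ j ∈ C, ∑ l ∈ C, -(r j • r l • δ j l) := by
            refine Finset.sum_congr rfl fun j _ => Finset.sum_congr rfl fun l _ => ?_
            rw [hanti l j, smul_neg, smul_neg, smul_comm]
        _ = - ∑ j ∈ C, ∑ l ∈ C, r j • r l • δ j l := by
            simp [Finset.sum_neg_distrib]
        _ = - ∑ l ∈ C, r l • ∑ j ∈ C, r j • δ l j := by
            rw [neg_inj]
            exact Finset.sum_congr rfl fun j _ => Finset.smul_sum.symm
    have h2 : (2:ℝ) • (∑ l ∈ C, r l • ∑ j ∈ C, r j • δ l j) = 0 := by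
      rw [two_smul]
      nth_rewrite 2 [h1]
      exact add_neg_cancel _
    have := smul_eq_zero.mp h2
    rcases this with h | h
    · norm_num at h
    · exact h
  -- constant terms in the inner sum collapse
  have hconst : ∀ v : EuclideanSpace ℝ (Fin d),
      ∑ j ∈ C, r j • (s⁻¹ • v) = v := by
    intro v
    rw [← Finset.sum_smul, ← hs, smul_smul, mul_inv_cancel₀ hr'.ne', one_smul]
  have hswap : ∀ f : Fin n → EuclideanSpace ℝ (Fin d),
      ∑ j ∈ C, r j • (s⁻¹ • f j) = s⁻¹ • ∑ j ∈ C, r j • f j := by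
    intro f
    rw [Finset.smul_sum]
    exact Finset.sum_congr rfl fun j _ => smul_comm _ _ _
  -- left-hand side
  have hL : a i - s⁻¹ • ∑ l ∈ C, r l • a l
      = ((x i - ω i) - (∑ j ∈ C, r j • δ i j) - (∑ j ∈ D, r j • δ i j))
        - s⁻¹ • ((∑ l ∈ C, r l • (x l - ω l))
          - (∑ l ∈ C, r l • ∑ j ∈ D, r j • δ l j)) := by
    have e1 : ∑ l ∈ C, r l • a l
        = (∑ l ∈ C, r l • (x l - ω l)) - (∑ l ∈ C, r l • ∑ j ∈ C, r j • δ l j)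
          - (∑ l ∈ C, r l • ∑ j ∈ D, r j • δ l j) := by
      rw [← Finset.sum_sub_distrib, ← Finset.sum_sub_distrib]
      refine Finset.sum_congr rfl fun l _ => ?_
      rw [ha l]
      simp only [smul_sub]
    rw [ha i, e1, hdz]
    simp only [sub_zero]
  -- right-hand side
  have hR : ∑ j ∈ C, r j • q i j
      = -(∑ j ∈ C, r j • δ i j) + (x i - ω i)
        - s⁻¹ • (∑ j ∈ C, r j • (x j - ω j))
        - (∑ k ∈ D, r k • δ i k)
        + s⁻¹ • (∑ j ∈ C, r j • ∑ k ∈ D, r k • δ j k) := by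
    have e1 : ∀ j ∈ C, r j • q i j
        = -(r j • δ i j) + r j • (s⁻¹ • (x i - ω i)) - r j • (s⁻¹ • (x j - ω j))
          - r j • (s⁻¹ • (∑ k ∈ D, r k • δ i k))
          + r j • (s⁻¹ • (∑ k ∈ D, r k • δ j k)) := by
      intro j hj
      rw [hq i hi j hj]
      have e2 : ∑ k ∈ D, r k • (δ i k - δ j k)
          = (∑ k ∈ D, r k • δ i k) - ∑ k ∈ D, r k • δ j k := by
        rw [← Finset.sum_sub_distrib]
        exact Finset.sum_congr rfl fun k _ => smul_sub _ _ _
      have e3 : x i - x j - ω i + ω j = (x i - ω i) - (x j - ω j) := by abel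
      rw [e2, e3]
      simp only [smul_sub, smul_add, smul_neg]
      abel
    rw [Finset.sum_congr rfl e1]
    simp only [Finset.sum_add_distrib, Finset.sum_sub_distrib, Finset.sum_neg_distrib]
    rw [hconst (x i - ω i), hconst (∑ k ∈ D, r k • δ i k)]
    simp only [hswap]
  rw [hL, hR, smul_sub]
  abel
end

section
/- Consider minimizing F(x) = (1/2)Σᵢ rᵢ‖xᵢ−aᵢ‖² + λΣ_{i<j} rᵢr_j‖xᵢ−x_j‖ over x ∈ ℝ^{nd} with rᵢ > 0, λ ≥ 0. The following δ-formulation is a valid weak-duality bound: for any δ_{ij} ∈ ℝᵈ (i<j) with ‖δ_{ij}‖ ≤ λ, we have min_x F(x) ≥ h'(δ), where h'(δ) = −(1/2)Σ_{j=1}ⁿ r_j‖Σ_{i=1}ⁿ r_i δ_{⟨ij⟩}‖² + Σ_{i,j=1}ⁿ r_i r_j ⟨δ_{⟨ij⟩}, a_j⟩, with δ_{⟨·⟩} the antisymmetric extension. -/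
open Finset
open scoped RealInnerProductSpace

/-! With `g j = ∑ i, r i • δ i j`, the dual objective equals `∑ j, r j * (-½‖g j‖² + ⟪g j, a j⟫)`.
Completing the square, `‖x j - a j + g j‖² ≥ 0`, bounds each summand by
`r j * (½‖x j - a j‖² + ⟪g j, x j⟫)`. Pairing `(i, j)` with `(j, i)` and using antisymmetry,
`∑ j, r j * ⟪g j, x j⟫ = ∑_{i<j} r i r j ⟪δ i j, x j - x i⟫`, which Cauchy–Schwarz and
`‖δ i j‖ ≤ λ` bound by the fusion penalty. -/

theorem Finset.sum_sum_eq_sum_lt_add_sum_diag {ι M : Type*} [Fintype ι] [LinearOrder ι]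
    [AddCommMonoid M] (F : ι → ι → M) :
    ∑ i, ∑ j, F i j
      = ∑ p ∈ univ.filter (fun p : ι × ι => p.1 < p.2), (F p.1 p.2 + F p.2 p.1) + ∑ i, F i i := by
  have hswap : ∑ p ∈ univ.filter (fun p : ι × ι => p.1 < p.2), F p.2 p.1
      = ∑ p ∈ univ.filter (fun p : ι × ι => p.2 < p.1), F p.1 p.2 :=
    sum_equiv (Equiv.prodComm ι ι) (by simp) (by simp)
  have hdiag : ∑ p ∈ univ.filter (fun p : ι × ι => p.1 = p.2), F p.1 p.2 = ∑ i, F i i := by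
    rw [sum_filter, Fintype.sum_prod_type]
    exact sum_congr rfl fun i _ => by simp
  have hnot_lt : ∑ p ∈ univ.filter (fun p : ι × ι => ¬ p.1 < p.2), F p.1 p.2
      = ∑ p ∈ univ.filter (fun p : ι × ι => p.2 < p.1), F p.1 p.2
        + ∑ p ∈ univ.filter (fun p : ι × ι => p.1 = p.2), F p.1 p.2 := by
    rw [← sum_filter_add_sum_filter_not _ (fun p : ι × ι => p.2 < p.1), filter_filter,
      filter_filter]
    congr 2 <;> ext p <;> simp only [mem_filter, mem_univ, true_and] <;> grind
  rw [sum_add_distrib, hswap, ← hdiag, add_assoc, ← hnot_lt, sum_filter_add_sum_filter_not,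
    Fintype.sum_prod_type']

section Inner

variable {ι E : Type*} [Fintype ι] [NormedAddCommGroup E] [InnerProductSpace ℝ E]

theorem neg_half_norm_sq_add_inner_le (g a x : E) :
    -(1/2) * ‖g‖ ^ 2 + ⟪g, a⟫ ≤ (1/2) * ‖x - a‖ ^ 2 + ⟪g, x⟫ := by
  have h := norm_add_sq_real (x - a) g
  rw [inner_sub_left, real_inner_comm g x, real_inner_comm g a] at h
  nlinarith [sq_nonneg ‖x - a + g‖]

theorem sum_sum_mul_inner_eq_sum_mul_inner_sum (r : ι → ℝ) (δ : ι → ι → E) (y : ι → E) :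
    ∑ i, ∑ j, r i * r j * ⟪δ i j, y j⟫ = ∑ j, r j * ⟪∑ i, r i • δ i j, y j⟫ := by
  rw [sum_comm]
  refine sum_congr rfl fun j _ => ?_
  rw [sum_inner, mul_sum]
  refine sum_congr rfl fun i _ => ?_
  rw [real_inner_smul_left]
  ring

theorem sum_sum_mul_inner_le_of_antisymm [LinearOrder ι] {r : ι → ℝ} {lam : ℝ} {δ : ι → ι → E}
    (hr : ∀ i, 0 ≤ r i) (hzero : ∀ i, δ i i = 0) (hanti : ∀ i j, δ i j = -δ j i)
    (hfeas : ∀ i j, i < j → ‖δ i j‖ ≤ lam) (x : ι → E) :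
    ∑ i, ∑ j, r i * r j * ⟪δ i j, x j⟫
      ≤ lam * ∑ p ∈ univ.filter (fun p : ι × ι => p.1 < p.2), r p.1 * r p.2 * ‖x p.1 - x p.2‖ := by
  rw [sum_sum_eq_sum_lt_add_sum_diag, mul_sum]
  simp only [hzero, inner_zero_left, mul_zero, sum_const_zero, add_zero]
  refine sum_le_sum fun p hp => ?_
  have hlt : p.1 < p.2 := (mem_filter.1 hp).2
  have hpair : r p.1 * r p.2 * ⟪δ p.1 p.2, x p.2⟫ + r p.2 * r p.1 * ⟪δ p.2 p.1, x p.1⟫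
      = r p.1 * r p.2 * ⟪δ p.1 p.2, x p.2 - x p.1⟫ := by
    rw [hanti p.2 p.1, inner_neg_left, inner_sub_right]
    ring
  have hcs : ⟪δ p.1 p.2, x p.2 - x p.1⟫ ≤ lam * ‖x p.1 - x p.2‖ := by
    rw [norm_sub_rev]
    exact (real_inner_le_norm _ _).trans
      (mul_le_mul_of_nonneg_right (hfeas _ _ hlt) (norm_nonneg _))
  rw [hpair]
  calc r p.1 * r p.2 * ⟪δ p.1 p.2, x p.2 - x p.1⟫
      ≤ r p.1 * r p.2 * (lam * ‖x p.1 - x p.2‖) :=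
        mul_le_mul_of_nonneg_left hcs (mul_nonneg (hr _) (hr _))
    _ = lam * (r p.1 * r p.2 * ‖x p.1 - x p.2‖) := by ring

end Inner

theorem son_weak_duality_general {n d : ℕ}
    (a : Fin n → EuclideanSpace ℝ (Fin d)) (r : Fin n → ℝ) (lam : ℝ)
    (hr : ∀ i, 0 < r i)
    (δ : Fin n → Fin n → EuclideanSpace ℝ (Fin d))
    (hzero : ∀ i, δ i i = 0) (hanti : ∀ i j, δ i j = - δ j i)
    (hfeas : ∀ i j, i < j → ‖δ i j‖ ≤ lam) :
    ∀ x : Fin n → EuclideanSpace ℝ (Fin d),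
      -(1/2) * ∑ j, r j * ‖∑ i, r i • δ i j‖^2
        + ∑ i, ∑ j, r i * r j * (inner ℝ (δ i j) (a j) : ℝ)
      ≤ (1/2) * ∑ i, r i * ‖x i - a i‖^2 +
        lam * ∑ p ∈ Finset.univ.filter (fun p : Fin n × Fin n => p.1 < p.2),
          r p.1 * r p.2 * ‖x p.1 - x p.2‖ := by
  intro x
  set g : Fin n → EuclideanSpace ℝ (Fin d) := fun j => ∑ i, r i • δ i j
  have hr' : ∀ i, 0 ≤ r i := fun i => (hr i).le
  calc -(1/2) * ∑ j, r j * ‖g j‖ ^ 2 + ∑ i, ∑ j, r i * r j * ⟪δ i j, a j⟫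
      = ∑ j, r j * (-(1/2) * ‖g j‖ ^ 2 + ⟪g j, a j⟫) := by
        rw [sum_sum_mul_inner_eq_sum_mul_inner_sum, mul_sum, ← sum_add_distrib]
        exact sum_congr rfl fun j _ => by ring
    _ ≤ ∑ j, r j * ((1/2) * ‖x j - a j‖ ^ 2 + ⟪g j, x j⟫) :=
        sum_le_sum fun j _ =>
          mul_le_mul_of_nonneg_left (neg_half_norm_sq_add_inner_le _ _ _) (hr' j)
    _ = (1/2) * ∑ i, r i * ‖x i - a i‖ ^ 2 + ∑ i, ∑ j, r i * r j * ⟪δ i j, x j⟫ := by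
        rw [sum_sum_mul_inner_eq_sum_mul_inner_sum, mul_sum, ← sum_add_distrib]
        exact sum_congr rfl fun j _ => by ring
    _ ≤ _ := add_le_add_right (sum_sum_mul_inner_le_of_antisymm hr' hzero hanti hfeas x) _

/-- Weak duality for sum-of-norms clustering with multiplicative weights. -/
theorem son_weak_duality {n d : ℕ}
    (a : Fin n → EuclideanSpace ℝ (Fin d)) (r : Fin n → ℝ) (lam : ℝ)
    (hr : ∀ i, 0 < r i) (hlam : 0 ≤ lam)
    (δ : Fin n → Fin n → EuclideanSpace ℝ (Fin d))
    (hzero : ∀ i, δ i i = 0) (hanti : ∀ i j, δ i j = - δ j i)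
    (hfeas : ∀ i j, i < j → ‖δ i j‖ ≤ lam) :
    ∀ x : Fin n → EuclideanSpace ℝ (Fin d),
      -(1/2) * ∑ j, r j * ‖∑ i, r i • δ i j‖^2
        + ∑ i, ∑ j, r i * r j * (inner ℝ (δ i j) (a j) : ℝ)
      ≤ (1/2) * ∑ i, r i * ‖x i - a i‖^2 +
        lam * ∑ p ∈ Finset.univ.filter (fun p : Fin n × Fin n => p.1 < p.2),
          r p.1 * r p.2 * ‖x p.1 - x p.2‖ :=
  son_weak_duality_general a r lam hr δ hzero hanti hfeas
end

section
/- Fix δ_{ij} ∈ ℝᵈ for 1 ≤ i < j ≤ n with antisymmetric extension δ_{⟨ij⟩}, weights r_i > 0, and data a₁,…,aₙ ∈ ℝᵈ. Then the inner Lagrangian minimization over x of L(x) = (1/2)Σᵢ r_i‖x_i − a_i‖² − Σ_{i<j} r_i r_j⟨δ_{ij}, x_i − x_j⟩ is attained at x_i = a_i + Σ_j r_j δ_{⟨ij⟩} for each i, and min_x L(x) = −(1/2)Σ_{j=1}ⁿ r_j‖Σ_{i=1}ⁿ r_i δ_{⟨ij⟩}‖² + Σ_{i,j=1}ⁿ r_i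 r_j⟨δ_{⟨ij⟩}, a_j⟩. -/
open Finset
open scoped RealInnerProductSpace

lemma sum_pairs_double {n : ℕ} (F : Fin n → Fin n → ℝ)
    (hsym : ∀ i j, F i j = F j i) (hdiag : ∀ i, F i i = 0) :
    ∑ i, ∑ j, F i j
      = 2 * ∑ p ∈ Finset.univ.filter (fun p : Fin n × Fin n => p.1 < p.2), F p.1 p.2 := by
  have h0 : ∑ i, ∑ j, F i j = ∑ p : Fin n × Fin n, F p.1 p.2 :=
    (Fintype.sum_prod_type (fun p : Fin n × Fin n => F p.1 p.2)).symm
  rw [h0, ← Finset.sum_filter_add_sum_filter_not Finset.univ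
      (fun p : Fin n × Fin n => p.1 < p.2) (fun p => F p.1 p.2)]
  have h1 : ∑ p ∈ Finset.univ.filter (fun p : Fin n × Fin n => ¬ p.1 < p.2), F p.1 p.2
      = ∑ p ∈ Finset.univ.filter (fun p : Fin n × Fin n => p.2 < p.1), F p.1 p.2 := by
    refine (Finset.sum_subset ?_ ?_).symm
    · intro p hp
      simp only [Finset.mem_filter, Finset.mem_univ, true_and] at hp ⊢
      omega
    · intro p hp hnp
      simp only [Finset.mem_filter, Finset.mem_univ, true_and] at hp hnp
      have he : p.1 = p.2 := by omega
      rw [he, hdiag]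
  have h2 : ∑ p ∈ Finset.univ.filter (fun p : Fin n × Fin n => p.2 < p.1), F p.1 p.2
      = ∑ p ∈ Finset.univ.filter (fun p : Fin n × Fin n => p.1 < p.2), F p.1 p.2 := by
    refine Finset.sum_nbij' Prod.swap Prod.swap ?_ ?_ ?_ ?_ ?_
    · intro p hp; simp only [Finset.mem_filter, Finset.mem_univ, true_and] at hp ⊢; exact hp
    · intro p hp; simp only [Finset.mem_filter, Finset.mem_univ, true_and] at hp ⊢; exact hp
    · intro p _; simp
    · intro p _; simp
    · intro p _; exact hsym p.1 p.2
  rw [h1, h2]; ring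

/-- Explicit minimization of the inner Lagrangian over x, with the evaluated
minimum value being the dual function. -/
theorem lagrangian_inner_minimization {n d : ℕ}
    (a : Fin n → EuclideanSpace ℝ (Fin d)) (r : Fin n → ℝ)
    (hr : ∀ i, 0 < r i)
    (δ : Fin n → Fin n → EuclideanSpace ℝ (Fin d))
    (hzero : ∀ i, δ i i = 0) (hanti : ∀ i j, δ i j = - δ j i)
    (L : (Fin n → EuclideanSpace ℝ (Fin d)) → ℝ)
    (hL : ∀ x, L x = (1/2) * ∑ i, r i * ‖x i - a i‖^2
      - ∑ p ∈ Finset.univ.filter (fun p : Fin n × Fin n => p.1 < p.2),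
          r p.1 * r p.2 * (inner ℝ (δ p.1 p.2) (x p.1 - x p.2) : ℝ))
    (xhat : Fin n → EuclideanSpace ℝ (Fin d))
    (hxhat : ∀ i, xhat i = a i + ∑ j, r j • δ i j) :
    (∀ x, L xhat ≤ L x) ∧
    L xhat = -(1/2) * ∑ j, r j * ‖∑ i, r i • δ i j‖^2
      + ∑ i, ∑ j, r i * r j * (inner ℝ (δ i j) (a j) : ℝ) := by
  -- the pair-sum identity
  have hpair : ∀ x : Fin n → EuclideanSpace ℝ (Fin d),
      ∑ p ∈ Finset.univ.filter (fun p : Fin n × Fin n => p.1 < p.2),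
          r p.1 * r p.2 * (inner ℝ (δ p.1 p.2) (x p.1 - x p.2) : ℝ)
      = ∑ i, r i * (inner ℝ (∑ j, r j • δ i j) (x i) : ℝ) := by
    intro x
    have hsym : ∀ i j, r i * r j * (inner ℝ (δ i j) (x i - x j) : ℝ)
        = r j * r i * (inner ℝ (δ j i) (x j - x i) : ℝ) := by
      intro i j
      rw [hanti j i, ← neg_sub (x i) (x j), inner_neg_neg]; ring
    have hdiag : ∀ i, r i * r i * (inner ℝ (δ i i) (x i - x i) : ℝ) = 0 := by
      intro i; rw [hzero]; simp
    have hF := sum_pairs_double (fun i j => r i * r j * (inner ℝ (δ i j) (x i - x j) : ℝ))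
      hsym hdiag
    have hA : ∑ i, ∑ j, r i * r j * (inner ℝ (δ i j) (x i - x j) : ℝ)
        = (∑ i, ∑ j, r i * r j * (inner ℝ (δ i j) (x i) : ℝ))
          - ∑ i, ∑ j, r i * r j * (inner ℝ (δ i j) (x j) : ℝ) := by
      simp [inner_sub_right, mul_sub, Finset.sum_sub_distrib]
    have hB : (∑ i, ∑ j, r i * r j * (inner ℝ (δ i j) (x j) : ℝ))
        = - ∑ i, ∑ j, r i * r j * (inner ℝ (δ i j) (x i) : ℝ) := by
      rw [Finset.sum_comm]
      rw [show (∑ j, ∑ i, r i * r j * (inner ℝ (δ i j) (x j) : ℝ))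
          = ∑ j, ∑ i, -(r j * r i * (inner ℝ (δ j i) (x j) : ℝ)) from
        Finset.sum_congr rfl (fun j _ => Finset.sum_congr rfl (fun i _ => by
          rw [hanti i j, inner_neg_left]; ring))]
      simp
    have hC : (∑ i, ∑ j, r i * r j * (inner ℝ (δ i j) (x i) : ℝ))
        = ∑ i, r i * (inner ℝ (∑ j, r j • δ i j) (x i) : ℝ) := by
      refine Finset.sum_congr rfl (fun i _ => ?_)
      rw [sum_inner, Finset.mul_sum]
      exact Finset.sum_congr rfl (fun j _ => by rw [real_inner_smul_left]; ring)
    rw [hA, hB] at hF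
    rw [hC] at hF
    linarith
  -- completing the square, per coordinate
  have hsq : ∀ (rr : ℝ) (y aa gg : EuclideanSpace ℝ (Fin d)),
      (1/2) * (rr * ‖y - aa‖^2) - rr * (inner ℝ gg y : ℝ)
      = (1/2) * (rr * ‖y - (aa + gg)‖^2) - (1/2) * (rr * ‖gg‖^2) - rr * (inner ℝ gg aa : ℝ) := by
    intro rr y aa gg
    have h : y - (aa + gg) = (y - aa) - gg := by abel
    rw [h, norm_sub_sq_real (y - aa) gg, inner_sub_left, real_inner_comm gg y, real_inner_comm gg aa]
    ring
  -- the key rewriting of L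
  have hLkey : ∀ x, L x
      = (1/2) * ∑ i, r i * ‖x i - xhat i‖^2
        + (-(1/2) * ∑ i, r i * ‖(∑ j, r j • δ i j)‖^2
            - ∑ i, r i * (inner ℝ (∑ j, r j • δ i j) (a i) : ℝ)) := by
    intro x
    rw [hL, hpair]
    rw [Finset.mul_sum, ← Finset.sum_sub_distrib]
    rw [show (∑ i, ((1/2) * (r i * ‖x i - a i‖^2)
          - r i * (inner ℝ (∑ j, r j • δ i j) (x i) : ℝ)))
        = ∑ i, ((1/2) * (r i * ‖x i - xhat i‖^2)
            - (1/2) * (r i * ‖(∑ j, r j • δ i j)‖^2)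
            - r i * (inner ℝ (∑ j, r j • δ i j) (a i) : ℝ)) from
      Finset.sum_congr rfl (fun i _ => by rw [hxhat i]; exact hsq (r i) (x i) (a i) _)]
    rw [Finset.sum_sub_distrib, Finset.sum_sub_distrib, ← Finset.mul_sum, ← Finset.mul_sum]
    ring
  have hval : L xhat = -(1/2) * ∑ i, r i * ‖(∑ j, r j • δ i j)‖^2
      - ∑ i, r i * (inner ℝ (∑ j, r j • δ i j) (a i) : ℝ) := by
    rw [hLkey xhat]; simp
  constructor
  · intro x
    rw [hLkey x, hval]
    have h0 : 0 ≤ ∑ i, r i * ‖x i - xhat i‖^2 :=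
      Finset.sum_nonneg (fun i _ => mul_nonneg (hr i).le (sq_nonneg _))
    linarith
  · rw [hval]
    have hnorm : ∀ j, ‖∑ i, r i • δ i j‖ = ‖∑ i, r i • δ j i‖ := by
      intro j
      rw [show (∑ i, r i • δ i j) = -(∑ i, r i • δ j i) from ?_, norm_neg]
      rw [← Finset.sum_neg_distrib]
      exact Finset.sum_congr rfl (fun i _ => by rw [hanti i j, smul_neg])
    have hcross : ∑ i, ∑ j, r i * r j * (inner ℝ (δ i j) (a j) : ℝ)
        = - ∑ j, r j * (inner ℝ (∑ i, r i • δ j i) (a j) : ℝ) := by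
      rw [Finset.sum_comm]
      rw [show (∑ j, ∑ i, r i * r j * (inner ℝ (δ i j) (a j) : ℝ))
          = ∑ j, -(r j * (inner ℝ (∑ i, r i • δ j i) (a j) : ℝ)) from
        Finset.sum_congr rfl (fun j _ => ?_)]
      · simp
      · rw [sum_inner, Finset.mul_sum, ← Finset.sum_neg_distrib]
        exact Finset.sum_congr rfl (fun i _ => by
          rw [real_inner_smul_left, hanti i j, inner_neg_left]; ring)
    rw [hcross]
    rw [show (∑ j, r j * ‖∑ i, r i • δ i j‖^2) = ∑ j, r j * ‖∑ i, r i • δ j i‖^2 from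
      Finset.sum_congr rfl (fun j _ => by rw [hnorm j])]
    ring
end
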